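/- arXiv:2211.05076 — 3 statements merged into one kernel-verified Lean document; each statement's English description precedes it below -/
import Mathlib

section
/- Let Ψ be the standard normal survival function. Then for any σ > 0, ∫₁^∞ Ψ(σ/2 − (ln r)/σ) r⁻² dr = 2·Ψ(σ/2). -/
open MeasureTheory Real Filter

noncomputable def stdPhi : ℝ → ℝ := fun y => (Real.sqrt (2 * Real.pi))⁻¹ * Real.exp (-y ^ 2 / 2)

lemma stdPhi_cont : Continuous stdPhi := by
  unfold stdPhi; fun_prop

lemma stdPhi_nonneg (y : ℝ) : 0 ≤ stdPhi y := by
  unfold stdPhi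
  positivity

lemma stdPhi_integrable : Integrable stdPhi := by
  have h : Integrable (fun y : ℝ => Real.exp (-(2⁻¹ : ℝ) * y ^ 2)) :=
    integrable_exp_neg_mul_sq (by norm_num)
  have h2 := h.const_mul (Real.sqrt (2 * Real.pi))⁻¹
  refine h2.congr (Filter.Eventually.of_forall fun y => ?_)
  unfold stdPhi
  ring_nf

lemma psi_repr (Ψ : ℝ → ℝ)
    (hΨ : ∀ u, Ψ u = ∫ y in Set.Ioi u, (Real.sqrt (2 * Real.pi))⁻¹ * Real.exp (-y ^ 2 / 2))
    (u : ℝ) : Ψ u = (∫ y, stdPhi y) - ∫ y in Set.Iic u, stdPhi y := by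
  rw [hΨ]
  have := intervalIntegral.integral_Iic_add_Ioi (b := u) (μ := volume)
    stdPhi_integrable.integrableOn stdPhi_integrable.integrableOn
  have h : ∫ y in Set.Ioi u, (Real.sqrt (2 * Real.pi))⁻¹ * Real.exp (-y ^ 2 / 2)
      = ∫ y in Set.Ioi u, stdPhi y := rfl
  rw [h]
  linarith

lemma psi_hasDerivAt (Ψ : ℝ → ℝ)
    (hΨ : ∀ u, Ψ u = ∫ y in Set.Ioi u, (Real.sqrt (2 * Real.pi))⁻¹ * Real.exp (-y ^ 2 / 2))
    (u : ℝ) : HasDerivAt Ψ (-(stdPhi u)) u := by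
  have hrepr : ∀ v, Ψ v = ((∫ y, stdPhi y) - ∫ y in Set.Iic u, stdPhi y)
      - ∫ y in u..v, stdPhi y := by
    intro v
    rw [psi_repr Ψ hΨ v]
    have := intervalIntegral.integral_Iic_sub_Iic (f := stdPhi) (μ := volume) (a := u) (b := v)
      stdPhi_integrable.integrableOn stdPhi_integrable.integrableOn
    linarith
  have hd : HasDerivAt (fun v => ∫ y in u..v, stdPhi y) (stdPhi u) u :=
    intervalIntegral.integral_hasDerivAt_right
      stdPhi_integrable.intervalIntegrable
      stdPhi_cont.stronglyMeasurable.stronglyMeasurableAtFilter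
      stdPhi_cont.continuousAt
  have h2 : HasDerivAt (fun v => ((∫ y, stdPhi y) - ∫ y in Set.Iic u, stdPhi y)
      - ∫ y in u..v, stdPhi y) (0 - stdPhi u) u := (hasDerivAt_const _ _).sub hd
  rw [zero_sub] at h2
  exact (funext hrepr ▸ h2 : HasDerivAt Ψ (-(stdPhi u)) u)

lemma psi_cont (Ψ : ℝ → ℝ)
    (hΨ : ∀ u, Ψ u = ∫ y in Set.Ioi u, (Real.sqrt (2 * Real.pi))⁻¹ * Real.exp (-y ^ 2 / 2)) :
    Continuous Ψ :=
  continuous_iff_continuousAt.mpr fun u => (psi_hasDerivAt Ψ hΨ u).continuousAt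

lemma psi_bound (Ψ : ℝ → ℝ)
    (hΨ : ∀ u, Ψ u = ∫ y in Set.Ioi u, (Real.sqrt (2 * Real.pi))⁻¹ * Real.exp (-y ^ 2 / 2))
    (u : ℝ) : ‖Ψ u‖ ≤ ∫ y, stdPhi y := by
  rw [hΨ]
  have h : ∫ y in Set.Ioi u, (Real.sqrt (2 * Real.pi))⁻¹ * Real.exp (-y ^ 2 / 2)
      = ∫ y in Set.Ioi u, stdPhi y := rfl
  rw [h, Real.norm_eq_abs, abs_of_nonneg (integral_nonneg stdPhi_nonneg)]
  exact setIntegral_le_integral stdPhi_integrable (Filter.Eventually.of_forall stdPhi_nonneg)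

lemma psi_tendsto (Ψ : ℝ → ℝ)
    (hΨ : ∀ u, Ψ u = ∫ y in Set.Ioi u, (Real.sqrt (2 * Real.pi))⁻¹ * Real.exp (-y ^ 2 / 2)) :
    Tendsto Ψ atTop (nhds 0) := by
  have hcov : Tendsto (fun u : ℝ => ∫ y in Set.Iic u, stdPhi y) atTop
      (nhds (∫ y, stdPhi y)) :=
    (MeasureTheory.aecover_Iic tendsto_id).integral_tendsto_of_countably_generated
      stdPhi_integrable
  have h2 : Tendsto (fun u : ℝ => (∫ y, stdPhi y) - ∫ y in Set.Iic u, stdPhi y) atTop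
      (nhds ((∫ y, stdPhi y) - ∫ y, stdPhi y)) := tendsto_const_nhds.sub hcov
  rw [sub_self] at h2
  exact (funext (psi_repr Ψ hΨ) ▸ h2 : Tendsto Ψ atTop (nhds 0))

/-- key pointwise exponential identity -/
lemma stdPhi_shift (σ r : ℝ) (hσ : 0 < σ) (hr : 0 < r) :
    stdPhi (Real.log r / σ + σ / 2) * r = stdPhi (σ / 2 - Real.log r / σ) := by
  unfold stdPhi
  rw [mul_assoc, ← Real.exp_log hr, ← Real.exp_add, Real.exp_log hr]
  congr 2
  have hσ' : σ ≠ 0 := ne_of_gt hσ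
  field_simp
  ring

/-- For every `σ > 0`, `∫₁^∞ Ψ(σ/2 − ln r/σ) r⁻² dr = 2·Ψ(σ/2)`, where `Ψ` is
the standard normal survival function. -/
theorem stmt10
    (Ψ : ℝ → ℝ)
    (hΨ : ∀ u, Ψ u = ∫ y in Set.Ioi u, (Real.sqrt (2 * Real.pi))⁻¹ * Real.exp (-y ^ 2 / 2))
    (σ : ℝ) (hσ : 0 < σ) :
    ∫ r in Set.Ioi (1 : ℝ), Ψ (σ / 2 - Real.log r / σ) * (r ^ 2)⁻¹ = 2 * Ψ (σ / 2) := by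
  set C := ∫ y, stdPhi y with hC
  have hC0 : 0 ≤ C := integral_nonneg stdPhi_nonneg
  set F : ℝ → ℝ := fun r => -Ψ (σ / 2 - Real.log r / σ) * r⁻¹
    - Ψ (Real.log r / σ + σ / 2) with hF
  have hσ' : σ ≠ 0 := ne_of_gt hσ
  -- derivative of F
  have hderiv : ∀ r ∈ Set.Ioi (1 : ℝ),
      HasDerivAt F (Ψ (σ / 2 - Real.log r / σ) * (r ^ 2)⁻¹) r := by
    intro r hr
    have hr1 : (1 : ℝ) < r := hr
    have hr0 : 0 < r := by linarith
    have hr0' : r ≠ 0 := ne_of_gt hr0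
    have hg1 : HasDerivAt (fun r : ℝ => σ / 2 - Real.log r / σ) (0 - r⁻¹ / σ) r :=
      (hasDerivAt_const r (σ / 2)).sub ((Real.hasDerivAt_log hr0').div_const σ)
    have hg2 : HasDerivAt (fun r : ℝ => Real.log r / σ + σ / 2) (r⁻¹ / σ + 0) r :=
      ((Real.hasDerivAt_log hr0').div_const σ).add (hasDerivAt_const r (σ / 2))
    have hΨ1 : HasDerivAt (fun r : ℝ => Ψ (σ / 2 - Real.log r / σ))
        (-(stdPhi (σ / 2 - Real.log r / σ)) * (0 - r⁻¹ / σ)) r :=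
      (psi_hasDerivAt Ψ hΨ _).comp r hg1
    have hΨ2 : HasDerivAt (fun r : ℝ => Ψ (Real.log r / σ + σ / 2))
        (-(stdPhi (Real.log r / σ + σ / 2)) * (r⁻¹ / σ + 0)) r :=
      (psi_hasDerivAt Ψ hΨ _).comp r hg2
    have hinv : HasDerivAt (fun r : ℝ => r⁻¹) (-(r ^ 2)⁻¹) r := by
      simpa using hasDerivAt_inv hr0'
    have hfull : HasDerivAt F
        ((-(-(stdPhi (σ / 2 - Real.log r / σ)) * (0 - r⁻¹ / σ))) * r⁻¹
          + (-Ψ (σ / 2 - Real.log r / σ)) * (-(r ^ 2)⁻¹)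
          - (-(stdPhi (Real.log r / σ + σ / 2)) * (r⁻¹ / σ + 0))) r :=
      (hΨ1.neg.mul hinv).sub hΨ2
    convert hfull using 1
    have hshift := stdPhi_shift σ r hσ hr0
    have hrr : stdPhi (Real.log r / σ + σ / 2) = stdPhi (σ / 2 - Real.log r / σ) / r := by
      field_simp at hshift ⊢
      linarith
    rw [hrr]
    field_simp
    ring
  -- integrability of the integrand
  have hbound : IntegrableOn (fun r : ℝ => C * (r ^ 2)⁻¹) (Set.Ioi (1 : ℝ)) := by
    have h : IntegrableOn (fun r : ℝ => r ^ (-2 : ℝ)) (Set.Ioi (1 : ℝ)) :=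
      integrableOn_Ioi_rpow_of_lt (by norm_num) one_pos
    refine IntegrableOn.congr_fun (h.const_mul C) (fun r hr => ?_) measurableSet_Ioi
    have hr0 : 0 < r := lt_trans one_pos hr
    rw [Real.rpow_neg hr0.le]
    norm_num [Real.rpow_natCast, Real.rpow_two]
  have hint : IntegrableOn (fun r : ℝ => Ψ (σ / 2 - Real.log r / σ) * (r ^ 2)⁻¹)
      (Set.Ioi (1 : ℝ)) := by
    refine Integrable.mono' hbound ?_ ?_
    · refine ContinuousOn.aestronglyMeasurable ?_ measurableSet_Ioi
      refine ContinuousOn.mul ?_ ?_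
      · refine (psi_cont Ψ hΨ).comp_continuousOn ?_
        exact continuousOn_const.sub ((Real.continuousOn_log.mono (fun r hr =>
          ne_of_gt (lt_trans one_pos hr))).div_const σ)
      · exact ContinuousOn.inv₀ (continuousOn_pow 2)
          (fun r hr => pow_ne_zero 2 (ne_of_gt (lt_trans one_pos hr)))
    · refine (ae_restrict_iff' measurableSet_Ioi).2 (Filter.Eventually.of_forall fun r hr => ?_)
      have hr0 : 0 < r := lt_trans one_pos hr
      rw [norm_mul]
      have h2 : ‖(r ^ 2 : ℝ)⁻¹‖ = (r ^ 2)⁻¹ := by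
        rw [Real.norm_eq_abs, abs_of_nonneg (by positivity)]
      rw [h2]
      exact mul_le_mul_of_nonneg_right (psi_bound Ψ hΨ _) (by positivity)
  -- limit of F at infinity
  have htends : Tendsto F atTop (nhds 0) := by
    have h1 : Tendsto (fun r : ℝ => -Ψ (σ / 2 - Real.log r / σ) * r⁻¹) atTop (nhds 0) := by
      have hb : Tendsto (fun r : ℝ => C * r⁻¹) atTop (nhds (C * 0)) :=
        tendsto_const_nhds.mul tendsto_inv_atTop_zero
      rw [mul_zero] at hb
      refine squeeze_zero_norm' ?_ hb
      filter_upwards [eventually_gt_atTop (0 : ℝ)] with r hr0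
      rw [norm_mul, norm_neg]
      have h2 : ‖(r : ℝ)⁻¹‖ = r⁻¹ := by
        rw [Real.norm_eq_abs, abs_of_nonneg (by positivity)]
      rw [h2]
      exact mul_le_mul_of_nonneg_right (psi_bound Ψ hΨ _) (by positivity)
    have h2 : Tendsto (fun r : ℝ => Ψ (Real.log r / σ + σ / 2)) atTop (nhds 0) := by
      refine (psi_tendsto Ψ hΨ).comp ?_
      exact tendsto_atTop_add_const_right _ (σ / 2)
        ((Real.tendsto_log_atTop).atTop_div_const hσ)
    have := h1.sub h2
    rw [sub_zero] at this
    exact this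
  -- continuity at 1
  have hcont : ContinuousWithinAt F (Set.Ici (1 : ℝ)) 1 := by
    have hca : ContinuousAt F 1 := by
      have hg1 : ContinuousAt (fun r : ℝ => σ / 2 - Real.log r / σ) 1 :=
        continuousAt_const.sub ((Real.continuousAt_log one_ne_zero).div_const σ)
      have hg2 : ContinuousAt (fun r : ℝ => Real.log r / σ + σ / 2) 1 :=
        ((Real.continuousAt_log one_ne_zero).div_const σ).add continuousAt_const
      exact ((((psi_cont Ψ hΨ).continuousAt.comp hg1).neg.mul
        (continuousAt_inv₀ one_ne_zero)).sub ((psi_cont Ψ hΨ).continuousAt.comp hg2))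
    exact hca.continuousWithinAt
  have hmain := MeasureTheory.integral_Ioi_of_hasDerivAt_of_tendsto hcont hderiv hint htends
  rw [hmain]
  simp [hF, Real.log_one]
  ring
end

section
/- Let V be a centered Gaussian random variable with variance σ² > 0 and let R be an independent 1-Pareto random variable (P(R > r) = 1/r, r ≥ 1). Then P(R·exp(V − σ²/2) > 1) = 2·Ψ(σ/2), where Ψ is the standard normal survival function. -/
/-!
Conditioning on `V = x`, the Pareto tail gives `P(R > exp (σ²/2 - x)) = min 1 (exp (x - σ²/2))`.
On `{x > σ²/2}` this is `1`, contributing `P(V > σ²/2)`. On `{x ≤ σ²/2}` the factor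
`exp (x - σ²/2)` is the exponential tilt turning `N(0, σ²)` into `N(σ², σ²)`, so this part is
`P(N(σ², σ²) ≤ σ²/2)`, which by symmetry is again `P(V > σ²/2) = Ψ(σ/2)`.
-/

open MeasureTheory ProbabilityTheory Real Set
open scoped ENNReal NNReal

lemma gaussianPDFReal_mul_exp (m : ℝ) (v : ℝ≥0) (t x : ℝ) :
    gaussianPDFReal m v x * exp (t * (x - m) - v * t ^ 2 / 2)
      = gaussianPDFReal (m + v * t) v x := by
  rcases eq_or_ne v 0 with rfl | hv
  · simp [gaussianPDFReal_zero_var]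
  have hv' : (v : ℝ) ≠ 0 := by exact_mod_cast hv
  rw [gaussianPDFReal, gaussianPDFReal, mul_assoc, ← exp_add]
  congr 2
  field_simp
  ring

lemma withDensity_exp_gaussianReal (m : ℝ) {v : ℝ≥0} (hv : v ≠ 0) (t : ℝ) :
    (gaussianReal m v).withDensity (fun x ↦ ENNReal.ofReal (exp (t * (x - m) - v * t ^ 2 / 2)))
      = gaussianReal (m + v * t) v := by
  rw [gaussianReal_of_var_ne_zero _ hv, gaussianReal_of_var_ne_zero _ hv,
    ← withDensity_mul _ (measurable_gaussianPDF _ _) (by fun_prop)]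
  congr 1
  ext x
  rw [Pi.mul_apply, gaussianPDF, gaussianPDF, ← ENNReal.ofReal_mul (gaussianPDFReal_nonneg _ _ _),
    gaussianPDFReal_mul_exp]

lemma gaussianReal_Iic_eq_Ici (m x : ℝ) (v : ℝ≥0) :
    gaussianReal m v (Iic x) = gaussianReal 0 v (Ici (m - x)) := by
  have hpre : (m - ·) ⁻¹' Iic x = Ici (m - x) := by
    ext y; simp only [mem_preimage, mem_Iic, mem_Ici]; constructor <;> intro h <;> linarith
  rw [← hpre, ← Measure.map_apply (by fun_prop) measurableSet_Iic, gaussianReal_map_const_sub,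
    sub_zero]

lemma gaussianReal_Ioi_mul {σ : ℝ} (hσ : 0 < σ) (u : ℝ) :
    gaussianReal 0 (σ ^ 2).toNNReal (Ioi (σ * u)) = gaussianReal 0 1 (Ioi u) := by
  have hlaw : (gaussianReal 0 1).map (σ * ·) = gaussianReal 0 (σ ^ 2).toNNReal := by
    rw [gaussianReal_map_const_mul, mul_zero, mul_one]
    congr 1
    ext
    simp [sq_nonneg]
  have hpre : (σ * ·) ⁻¹' Ioi (σ * u) = Ioi u := by
    ext y; simp [mul_lt_mul_iff_right₀ hσ]
  rw [← hlaw, Measure.map_apply (by fun_prop) measurableSet_Ioi, hpre]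

lemma gaussianReal_zero_one_Ioi (u : ℝ) :
    gaussianReal 0 1 (Ioi u)
      = ENNReal.ofReal (∫ y in Ioi u, (√(2 * π))⁻¹ * exp (-y ^ 2 / 2)) := by
  rw [gaussianReal_apply_eq_integral 0 one_ne_zero]
  congr 2 with y
  simp [gaussianPDFReal, neg_div]

lemma lintegral_min_one_exp_gaussianReal {v : ℝ≥0} (hv : v ≠ 0) :
    ∫⁻ x, ENNReal.ofReal (min 1 (exp (x - v / 2))) ∂gaussianReal 0 v
      = 2 * gaussianReal 0 v (Ioi (v / 2)) := by
  have := nullSingletonClass_gaussianReal (μ := 0) hv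
  have hlow :
      ∫⁻ x in Iic (v / 2 : ℝ), ENNReal.ofReal (min 1 (exp (x - v / 2))) ∂gaussianReal 0 v
        = gaussianReal 0 v (Ioi (v / 2)) := by
    have hexp : ∀ x ∈ Iic (v / 2 : ℝ), ENNReal.ofReal (min 1 (exp (x - v / 2)))
        = ENNReal.ofReal (exp (1 * (x - 0) - v * 1 ^ 2 / 2)) := fun x hx ↦ by
      rw [min_eq_right (exp_le_one_iff.2 (by linarith [mem_Iic.1 hx]))]
      congr 2
      ring
    rw [setLIntegral_congr_fun measurableSet_Iic hexp, ← withDensity_apply _ measurableSet_Iic,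
      withDensity_exp_gaussianReal 0 hv, zero_add, mul_one, gaussianReal_Iic_eq_Ici, sub_half,
      measure_congr Ioi_ae_eq_Ici]
  have hhigh :
      ∫⁻ x in (Iic (v / 2 : ℝ))ᶜ, ENNReal.ofReal (min 1 (exp (x - v / 2))) ∂gaussianReal 0 v
        = gaussianReal 0 v (Ioi (v / 2)) := by
    rw [compl_Iic, ← setLIntegral_one]
    refine setLIntegral_congr_fun measurableSet_Ioi fun x hx ↦ ?_
    rw [min_eq_left (one_le_exp (by linarith [mem_Ioi.1 hx])), ENNReal.ofReal_one]
  rw [← lintegral_add_compl _ measurableSet_Iic, hlow, hhigh, two_mul]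

lemma IndepFun.measure_preimage_eq_lintegral {Ω α β : Type*} [MeasurableSpace Ω]
    [MeasurableSpace α] [MeasurableSpace β] {μ : Measure Ω} [IsFiniteMeasure μ]
    {X : Ω → α} {Y : Ω → β} (hX : Measurable X) (hY : Measurable Y) (h : IndepFun X Y μ)
    {s : Set (α × β)} (hs : MeasurableSet s) :
    μ ((fun ω ↦ (X ω, Y ω)) ⁻¹' s) = ∫⁻ x, μ.map Y (Prod.mk x ⁻¹' s) ∂μ.map X := by
  rw [← Measure.map_apply (hX.prodMk hY) hs,
    (indepFun_iff_map_prod_eq_prod_map_map hX.aemeasurable hY.aemeasurable).1 h,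
    Measure.prod_apply hs]

lemma measure_lt_eq_ofReal_min_inv {Ω : Type*} [MeasurableSpace Ω] {μ : Measure Ω}
    [IsProbabilityMeasure μ] {R : Ω → ℝ}
    (hPareto : ∀ r : ℝ, 1 ≤ r → μ {ω | r < R ω} = ENNReal.ofReal (1 / r)) {r : ℝ} (hr : 0 < r) :
    μ {ω | r < R ω} = ENNReal.ofReal (min 1 r⁻¹) := by
  rcases le_total 1 r with h1 | h1
  · rw [hPareto r h1, one_div, min_eq_right (inv_le_one_of_one_le₀ h1)]
  · rw [min_eq_left (one_le_inv₀ hr |>.2 h1), ENNReal.ofReal_one]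
    refine le_antisymm prob_le_one ?_
    calc (1 : ℝ≥0∞) = μ {ω | 1 < R ω} := by simp [hPareto 1 le_rfl]
      _ ≤ μ {ω | r < R ω} := measure_mono fun ω (hω : 1 < R ω) ↦ h1.trans_lt hω

/-- If `V ~ N(0, σ²)` and `R` is an independent 1-Pareto random variable, then
`P(R·exp(V − σ²/2) > 1) = 2·Ψ(σ/2)` with `Ψ` the standard normal survival function. -/
theorem stmt11 {Ω : Type*} [MeasurableSpace Ω] (μ : Measure Ω) [IsProbabilityMeasure μ]
    (σ : ℝ) (hσ : 0 < σ)
    (V R : Ω → ℝ) (hV : Measurable V) (hR : Measurable R)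
    (hVlaw : Measure.map V μ = gaussianReal 0 (Real.toNNReal (σ ^ 2)))
    (hPareto : ∀ r : ℝ, 1 ≤ r → μ {ω | r < R ω} = ENNReal.ofReal (1 / r))
    (hindep : IndepFun V R μ)
    (Ψ : ℝ → ℝ)
    (hΨ : ∀ u, Ψ u = ∫ y in Set.Ioi u, (Real.sqrt (2 * Real.pi))⁻¹ * Real.exp (-y ^ 2 / 2)) :
    μ {ω | 1 < R ω * Real.exp (V ω - σ ^ 2 / 2)} = ENNReal.ofReal (2 * Ψ (σ / 2)) := by
  set v := (σ ^ 2).toNNReal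
  have hv : (v : ℝ) = σ ^ 2 := Real.coe_toNNReal _ (sq_nonneg σ)
  have hv0 : v ≠ 0 := by simpa [v] using hσ.ne'
  have hevent : {ω | 1 < R ω * exp (V ω - σ ^ 2 / 2)}
      = (fun ω ↦ (V ω, R ω)) ⁻¹' {p | exp (-(p.1 - σ ^ 2 / 2)) < p.2} := by
    ext ω
    simp only [mem_ofPred_eq, mem_preimage, exp_neg, inv_lt_iff_one_lt_mul₀ (exp_pos _)]
  have hS : MeasurableSet {p : ℝ × ℝ | exp (-(p.1 - σ ^ 2 / 2)) < p.2} :=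
    measurableSet_lt (by fun_prop) measurable_snd
  have hR_tail (x : ℝ) : μ.map R (Prod.mk x ⁻¹' {p | exp (-(p.1 - σ ^ 2 / 2)) < p.2})
      = ENNReal.ofReal (min 1 (exp (x - σ ^ 2 / 2))) := by
    have h := measure_lt_eq_ofReal_min_inv hPareto (exp_pos (-(x - σ ^ 2 / 2)))
    rw [← exp_neg, neg_neg] at h
    rwa [Measure.map_apply hR (measurable_prodMk_left hS)]
  rw [hevent, IndepFun.measure_preimage_eq_lintegral hV hR hindep hS, hVlaw,
    lintegral_congr hR_tail, ← hv,
    lintegral_min_one_exp_gaussianReal hv0, hv, show σ ^ 2 / 2 = σ * (σ / 2) by ring,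
    gaussianReal_Ioi_mul hσ, gaussianReal_zero_one_Ioi, ← hΨ,
    ENNReal.ofReal_mul zero_le_two, ENNReal.ofReal_ofNat]
end

section
/- For the process Z(t) = exp(√2·B₁(t) − t²), t ∈ ℝ, where B₁(t) = t·N with N standard normal (fBm with H = 1), the Berman function over [0,T] with T > x ≥ 0 satisfies B_Z([0,T], x) = 2Ψ(x/√2) + √2(T − x)φ(x/√2), where φ and Ψ are the standard normal density and survival functions. Consequently lim_{T→∞} B_Z([0,T], x)/T = √2·φ(x/√2). -/
open MeasureTheory ProbabilityTheory Filter Set Real Topology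

/-!
Write `m = N / √2`. Then `Z(t) = exp (m² - (t - m)²)`, so `{Z > s}` is the interval centred at `m`
of radius `√(m² - log s)`, and its intersection with `[0, T]` is longer than `x` iff that radius
exceeds `criticalRadius x T m`, i.e. iff `s < criticalLevel x T N`. By the layer-cake formula the
Berman function is therefore `𝔼[criticalLevel x T N]`. Against the standard Gaussian density the
integrand becomes `φ (valley a L n)` with `a = x / √2`, `L = √2 (T - x)`: `valley` reflects
`(-∞, a]` onto `[a, ∞)`, is constant on `[a, a + L]` and translates `[a + L, ∞)` back onto
`[a, ∞)`, whence the value `2 Ψ(a) + L φ(a)`, which is affine in `T`.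
-/

lemma Real.volume_Icc_inter_Ioo (c d a b : ℝ) :
    volume (Icc c d ∩ Ioo a b) = ENNReal.ofReal (min d b - max c a) := by
  rw [measure_congr ((Ioo_ae_eq_Icc (μ := volume)).symm.inter (ae_eq_refl (Ioo a b))),
    Ioo_inter_Ioo, Real.volume_Ioo]

def valley (a L n : ℝ) : ℝ := max a (max (2 * a - n) (n - L))

section Valley

variable {f : ℝ → ℝ} {a L n : ℝ}

lemma valley_of_le (hL : 0 ≤ L) (hn : n ≤ a) : valley a L n = 2 * a - n := by
  rw [valley, max_eq_left (show n - L ≤ 2 * a - n by linarith), max_eq_right (by linarith)]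

lemma valley_of_mem_Icc (hn : n ∈ Icc a (a + L)) : valley a L n = a := by
  rw [valley, max_eq_left (max_le (by linarith [hn.1]) (by linarith [hn.2]))]

lemma valley_of_ge (hL : 0 ≤ L) (hn : a + L ≤ n) : valley a L n = n - L := by
  rw [valley, max_eq_right (show 2 * a - n ≤ n - L by linarith), max_eq_right (by linarith)]

lemma setIntegral_Iic_comp_valley (hL : 0 ≤ L) :
    ∫ n in Iic a, f (valley a L n) = ∫ y in Ioi a, f y := by
  have hpre : (fun n => 2 * a - n) ⁻¹' Ici a = Iic a := by
    ext n
    simp only [mem_preimage, mem_Ici, mem_Iic]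
    constructor <;> intro <;> linarith
  rw [setIntegral_congr_fun measurableSet_Iic fun n hn => by rw [valley_of_le hL hn], ← hpre,
    (Measure.measurePreserving_sub_left volume (2 * a)).setIntegral_preimage_emb
      (MeasurableEquiv.subLeft (2 * a)).measurableEmbedding f (Ici a),
    integral_Ici_eq_integral_Ioi]

lemma setIntegral_Ioi_comp_valley (hL : 0 ≤ L) :
    ∫ n in Ioi (a + L), f (valley a L n) = ∫ y in Ioi a, f y := by
  have hpre : (fun n => n - L) ⁻¹' Ioi a = Ioi (a + L) := by ext n; simp
  rw [setIntegral_congr_fun measurableSet_Ioi fun n hn => by rw [valley_of_ge hL (le_of_lt hn)],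
    ← hpre, (measurePreserving_sub_right volume L).setIntegral_preimage_emb
      (MeasurableEquiv.subRight L).measurableEmbedding f (Ioi a)]

lemma setIntegral_Ioc_comp_valley (hL : 0 ≤ L) :
    ∫ n in Ioc a (a + L), f (valley a L n) = L * f a := by
  rw [setIntegral_congr_fun measurableSet_Ioc
      fun n hn => by rw [valley_of_mem_Icc (Ioc_subset_Icc_self hn)],
    setIntegral_const, measureReal_def, Real.volume_Ioc, ENNReal.toReal_ofReal (by linarith),
    add_sub_cancel_left, smul_eq_mul]

lemma integrableOn_Iic_comp_valley (hf : Integrable f) (hL : 0 ≤ L) :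
    IntegrableOn (fun n => f (valley a L n)) (Iic a) :=
  (hf.comp_sub_left (2 * a)).integrableOn.congr_fun (fun n hn => by rw [valley_of_le hL hn])
    measurableSet_Iic

lemma integrableOn_Ioc_comp_valley :
    IntegrableOn (fun n => f (valley a L n)) (Ioc a (a + L)) :=
  (integrableOn_const (C := f a) (by simp)).congr_fun
    (fun n hn => by rw [valley_of_mem_Icc (Ioc_subset_Icc_self hn)]) measurableSet_Ioc

lemma integrableOn_Ioi_comp_valley (hf : Integrable f) (hL : 0 ≤ L) :
    IntegrableOn (fun n => f (valley a L n)) (Ioi (a + L)) :=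
  (hf.comp_sub_right L).integrableOn.congr_fun (fun n hn => by rw [valley_of_ge hL (le_of_lt hn)])
    measurableSet_Ioi

lemma integrable_comp_valley (hf : Integrable f) (hL : 0 ≤ L) :
    Integrable (fun n => f (valley a L n)) := by
  rw [← integrableOn_univ, ← Iic_union_Ioi (a := a),
    ← Ioc_union_Ioi_eq_Ioi (by linarith : a ≤ a + L)]
  exact (integrableOn_Iic_comp_valley hf hL).union
    (integrableOn_Ioc_comp_valley.union (integrableOn_Ioi_comp_valley hf hL))

lemma integral_comp_valley (hf : Integrable f) (hL : 0 ≤ L) :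
    ∫ n, f (valley a L n) = 2 * (∫ y in Ioi a, f y) + L * f a := by
  have hsplit := Ioc_union_Ioi_eq_Ioi (by linarith : a ≤ a + L)
  have hIoi : ∫ n in Ioi a, f (valley a L n) =
      (∫ n in Ioc a (a + L), f (valley a L n)) + ∫ n in Ioi (a + L), f (valley a L n) := by
    rw [← setIntegral_union Ioc_disjoint_Ioi_same measurableSet_Ioi
      (integrableOn_Ioc_comp_valley (f := f)) (integrableOn_Ioi_comp_valley hf hL), hsplit]
  rw [← intervalIntegral.integral_Iic_add_Ioi (integrableOn_Iic_comp_valley hf hL)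
      (hsplit ▸ integrableOn_Ioc_comp_valley.union (integrableOn_Ioi_comp_valley hf hL)),
    hIoi, setIntegral_Iic_comp_valley hL, setIntegral_Ioc_comp_valley hL,
    setIntegral_Ioi_comp_valley hL]
  ring

end Valley

noncomputable def criticalRadius (x T m : ℝ) : ℝ := max (x / 2) (max (x - m) (m - (T - x)))

noncomputable def criticalLevel (x T n : ℝ) : ℝ :=
  exp ((n / √2) ^ 2 - criticalRadius x T (n / √2) ^ 2)

section Geometry

variable {x T : ℝ}

lemma criticalRadius_nonneg (hx : 0 ≤ x) (m : ℝ) : 0 ≤ criticalRadius x T m :=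
  le_max_of_le_left (by linarith)

lemma lt_min_sub_max_iff_criticalRadius_lt (hT : x < T) (m r : ℝ) :
    x < min T (m + r) - max 0 (m - r) ↔ criticalRadius x T m < r := by
  simp only [criticalRadius, lt_sub_iff_add_lt', max_add, lt_min_iff, max_lt_iff]
  constructor
  · rintro ⟨⟨-, h₁⟩, h₂, h₃⟩
    exact ⟨by linarith, by linarith, by linarith⟩
  · rintro ⟨h₁, h₂, h₃⟩
    exact ⟨⟨by linarith, by linarith⟩, by linarith, by linarith⟩

lemma Real.setOf_sq_sub_lt (m d : ℝ) : {t : ℝ | (t - m) ^ 2 < d} = Ioo (m - √d) (m + √d) := by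
  ext t
  simp only [mem_ofPred_eq, mem_Ioo, Real.sq_lt]
  constructor <;> rintro ⟨h₁, h₂⟩ <;> constructor <;> linarith

lemma setOf_lt_exp_eq_Ioo {s : ℝ} (hs : 0 < s) (n : ℝ) :
    {t : ℝ | s < exp (√2 * t * n - t ^ 2)} =
      Ioo (n / √2 - √((n / √2) ^ 2 - log s)) (n / √2 + √((n / √2) ^ 2 - log s)) := by
  rw [← Real.setOf_sq_sub_lt]
  ext t
  have hn : n = √2 * (n / √2) := by field_simp
  have hsq : √2 * t * n - t ^ 2 = (n / √2) ^ 2 - (t - n / √2) ^ 2 := by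
    nth_rewrite 1 [hn]
    linear_combination t * (n / √2) * Real.mul_self_sqrt zero_le_two
  simp only [mem_ofPred_eq, hsq, ← log_lt_iff_lt_exp hs]
  constructor <;> intro <;> linarith

lemma ofReal_lt_volume_iff_lt_criticalLevel (hx : 0 ≤ x) (hT : x < T) {s : ℝ} (hs : 0 < s)
    (n : ℝ) :
    ENNReal.ofReal x < volume {t ∈ Icc (0 : ℝ) T | s < exp (√2 * t * n - t ^ 2)} ↔
      s < criticalLevel x T n := by
  rw [← inter_ofPred_eq_sep, setOf_lt_exp_eq_Ioo hs, Real.volume_Icc_inter_Ioo,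
    ENNReal.ofReal_lt_ofReal_iff_of_nonneg hx, lt_min_sub_max_iff_criticalRadius_lt hT,
    Real.lt_sqrt (criticalRadius_nonneg hx _), criticalLevel, ← log_lt_iff_lt_exp hs]
  constructor <;> intro <;> linarith

lemma measurable_criticalLevel : Measurable (criticalLevel x T) := by
  unfold criticalLevel criticalRadius
  fun_prop

end Geometry

lemma sqrt_two_mul_criticalRadius (x T n : ℝ) :
    √2 * criticalRadius x T (n / √2) = valley (x / √2) (√2 * (T - x)) n := by
  have e₁ : √2 * (x / 2) = x / √2 := by field_simp; rw [Real.sq_sqrt zero_le_two, mul_comm]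
  have e₂ : √2 * (x - n / √2) = 2 * (x / √2) - n := by rw [← e₁]; field_simp
  have e₃ : √2 * (n / √2 - (T - x)) = n - √2 * (T - x) := by field_simp
  rw [criticalRadius, valley, mul_max_of_nonneg _ _ (sqrt_nonneg 2),
    mul_max_of_nonneg _ _ (sqrt_nonneg 2), e₁, e₂, e₃]

lemma gaussianPDFReal_mul_criticalLevel (x T n : ℝ) :
    gaussianPDFReal 0 1 n * criticalLevel x T n =
      gaussianPDFReal 0 1 (valley (x / √2) (√2 * (T - x)) n) := by
  rw [← sqrt_two_mul_criticalRadius, criticalLevel]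
  simp only [gaussianPDFReal, NNReal.coe_one, mul_one, sub_zero, mul_assoc, ← exp_add]
  congr 2
  rw [div_pow, mul_pow, Real.sq_sqrt zero_le_two]
  ring

lemma integrable_criticalLevel_gaussianReal {x T : ℝ} (hT : x < T) :
    Integrable (criticalLevel x T) (gaussianReal 0 1) := by
  rw [gaussianReal_of_var_ne_zero 0 one_ne_zero, integrable_withDensity_iff_integrable_smul'
    (measurable_gaussianPDF 0 1) (ae_of_all _ fun _ => gaussianPDF_lt_top)]
  simp only [toReal_gaussianPDF, smul_eq_mul, gaussianPDFReal_mul_criticalLevel]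
  exact integrable_comp_valley (integrable_gaussianPDFReal 0 1) (by positivity)

lemma integral_criticalLevel_gaussianReal {x T : ℝ} (hT : x < T) :
    ∫ n, criticalLevel x T n ∂gaussianReal 0 1 =
      2 * (∫ y in Ioi (x / √2), gaussianPDFReal 0 1 y) +
        √2 * (T - x) * gaussianPDFReal 0 1 (x / √2) := by
  rw [integral_gaussianReal_eq_integral_smul one_ne_zero]
  simp only [smul_eq_mul, gaussianPDFReal_mul_criticalLevel]
  exact integral_comp_valley (integrable_gaussianPDFReal 0 1) (by positivity)

noncomputable def bermanFunction {Ω : Type*} [MeasurableSpace Ω] (μ : Measure Ω)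
    (Z : Ω → ℝ → ℝ) (T x : ℝ) : ℝ :=
  ∫ s in Ioi (0 : ℝ), (μ {ω | ENNReal.ofReal x < volume {t ∈ Icc (0 : ℝ) T | s < Z ω t}}).toReal

lemma bermanFunction_eq {Ω : Type*} [MeasurableSpace Ω] {μ : Measure Ω}
    {N : Ω → ℝ} (hN : Measurable N) (hNlaw : μ.map N = gaussianReal 0 1) {x T : ℝ}
    (hx : 0 ≤ x) (hT : x < T) :
    bermanFunction μ (fun ω t => exp (√2 * t * N ω - t ^ 2)) T x =
      2 * (∫ y in Ioi (x / √2), gaussianPDFReal 0 1 y) +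
        √2 * (T - x) * gaussianPDFReal 0 1 (x / √2) := by
  have hmeas : AEStronglyMeasurable (criticalLevel x T) (μ.map N) :=
    measurable_criticalLevel.aestronglyMeasurable
  have hint : Integrable (fun ω => criticalLevel x T (N ω)) μ :=
    (integrable_map_measure hmeas hN.aemeasurable).mp
      (hNlaw ▸ integrable_criticalLevel_gaussianReal hT)
  calc _ = ∫ s in Ioi (0 : ℝ), μ.real {ω | s < criticalLevel x T (N ω)} :=
        setIntegral_congr_fun measurableSet_Ioi fun s hs => by
          simp only [ofReal_lt_volume_iff_lt_criticalLevel hx hT hs, measureReal_def]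
    _ = ∫ ω, criticalLevel x T (N ω) ∂μ :=
        (hint.integral_eq_integral_meas_lt (ae_of_all _ fun _ => (exp_pos _).le)).symm
    _ = ∫ n, criticalLevel x T n ∂gaussianReal 0 1 := by
        rw [← hNlaw, integral_map hN.aemeasurable hmeas]
    _ = _ := integral_criticalLevel_gaussianReal hT

lemma tendsto_add_mul_sub_div_atTop (c d x : ℝ) :
    Tendsto (fun T => (c + d * (T - x)) / T) atTop (𝓝 d) := by
  have h := (tendsto_inv_atTop_zero.const_mul (c - d * x)).add_const d
  rw [mul_zero, zero_add] at h
  refine h.congr' ?_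
  filter_upwards [eventually_ne_atTop 0] with T hT
  field_simp
  ring

theorem stmt12_general {Ω : Type*} [MeasurableSpace Ω] (μ : Measure Ω)
    (N : Ω → ℝ) (hN : Measurable N)
    (hNlaw : Measure.map N μ = gaussianReal 0 1)
    (φ Ψ : ℝ → ℝ)
    (hφ : ∀ u, φ u = (Real.sqrt (2 * Real.pi))⁻¹ * Real.exp (-u ^ 2 / 2))
    (hΨ : ∀ u, Ψ u = ∫ y in Set.Ioi u, φ y)
    (x : ℝ) (hx : 0 ≤ x)
    (B : ℝ → ℝ)
    (hB : ∀ T : ℝ, B T =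
      ∫ s in Set.Ioi (0 : ℝ),
        (μ {ω | ENNReal.ofReal x <
          volume {t ∈ Set.Icc (0 : ℝ) T |
            s < Real.exp (Real.sqrt 2 * t * N ω - t ^ 2)}}).toReal) :
    (∀ T : ℝ, x < T →
        B T = 2 * Ψ (x / Real.sqrt 2) + Real.sqrt 2 * (T - x) * φ (x / Real.sqrt 2)) ∧
      Tendsto (fun T => B T / T) atTop (nhds (Real.sqrt 2 * φ (x / Real.sqrt 2))) := by
  obtain rfl : φ = gaussianPDFReal 0 1 := funext fun u => by simp [hφ, gaussianPDFReal]
  have hBT : ∀ T, x < T → B T = 2 * Ψ (x / √2) + √2 * (T - x) * gaussianPDFReal 0 1 (x / √2) :=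
    fun T hT => by rw [hΨ, ← bermanFunction_eq hN hNlaw hx hT, hB, bermanFunction]
  refine ⟨hBT, (tendsto_add_mul_sub_div_atTop (2 * Ψ (x / √2)) _ x).congr' ?_⟩
  filter_upwards [eventually_gt_atTop x] with T hT
  rw [hBT T hT, mul_right_comm]

/-- For `Z(t) = exp(√2·t·N − t²)` with `N` standard normal (fBm with `H = 1`):
`B_Z([0,T],x) = 2Ψ(x/√2) + √2(T−x)φ(x/√2)` for `T > x ≥ 0`, and consequently
`B_Z([0,T],x)/T → √2·φ(x/√2)` as `T → ∞`. -/
theorem stmt12 {Ω : Type*} [MeasurableSpace Ω] (μ : Measure Ω) [IsProbabilityMeasure μ]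
    (N : Ω → ℝ) (hN : Measurable N)
    (hNlaw : Measure.map N μ = gaussianReal 0 1)
    (φ Ψ : ℝ → ℝ)
    (hφ : ∀ u, φ u = (Real.sqrt (2 * Real.pi))⁻¹ * Real.exp (-u ^ 2 / 2))
    (hΨ : ∀ u, Ψ u = ∫ y in Set.Ioi u, φ y)
    (x : ℝ) (hx : 0 ≤ x)
    (B : ℝ → ℝ)
    (hB : ∀ T : ℝ, B T =
      ∫ s in Set.Ioi (0 : ℝ),
        (μ {ω | ENNReal.ofReal x <
          volume {t ∈ Set.Icc (0 : ℝ) T |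
            s < Real.exp (Real.sqrt 2 * t * N ω - t ^ 2)}}).toReal) :
    (∀ T : ℝ, x < T →
        B T = 2 * Ψ (x / Real.sqrt 2) + Real.sqrt 2 * (T - x) * φ (x / Real.sqrt 2)) ∧
      Tendsto (fun T => B T / T) atTop (nhds (Real.sqrt 2 * φ (x / Real.sqrt 2))) :=
  stmt12_general μ N hN hNlaw φ Ψ hφ hΨ x hx B hB
end
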